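/- arXiv:1611.09014 — 2 statements merged into one kernel-verified Lean document; each statement's English description precedes it below -/
import Mathlib

section
/- Completeness of shifting with respect to E-interpretations: for every clause set M, if sh(M) is E-satisfiable then M is E-satisfiable, where sh(M) = bs(pf(M)). -/
namespace BUMG

/-- First-order terms over function symbols `F`, with variables indexed by `ℕ`. -/
inductive Term (F : Type) : Type where
  | var : ℕ → Term F
  | app : F → List (Term F) → Term F

namespace Term
variable {F : Type}

/-- The list of variables occurring in a term. -/
def vars : Term F → List ℕ
  | var n => [n]
  | app _ ts => ts.attach.flatMap (fun t => vars t.1)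
decreasing_by simp_wf; have := List.sizeOf_lt_of_mem t.2; omega

/-- The function symbols (with the arity of the occurrence) occurring in a term. -/
def funcs : Term F → List (F × ℕ)
  | var _ => []
  | app f ts => (f, ts.length) :: ts.attach.flatMap (fun t => funcs t.1)
decreasing_by simp_wf; have := List.sizeOf_lt_of_mem t.2; omega

/-- Applying a substitution to a term. -/
def subst (g : ℕ → Term F) : Term F → Term F
  | var n => g n
  | app f ts => app f (ts.attach.map (fun t => subst g t.1))
decreasing_by simp_wf; have := List.sizeOf_lt_of_mem t.2; omega

/-- The number of occurrences of symbols (variables and function symbols) in a term. -/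
def size : Term F → ℕ
  | var _ => 1
  | app _ ts => 1 + (ts.attach.map (fun t => size t.1)).sum
decreasing_by simp_wf; have := List.sizeOf_lt_of_mem t.2; omega

/-- A term is ground iff it contains no variables. -/
def IsGround (t : Term F) : Prop := t.vars = []

def isVar : Term F → Bool
  | var _ => true
  | app _ _ => false

/-- A proper functional term is a term that is neither a variable nor a constant. -/
def isPF : Term F → Bool
  | app _ (_ :: _) => true
  | _ => false

/-- The subterm relation. -/
inductive Subterm : Term F → Term F → Prop
  | refl (t : Term F) : Subterm t t
  | app {s t : Term F} {f : F} {ts : List (Term F)} :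
      t ∈ ts → Subterm s t → Subterm s (app f ts)

end Term

/-- Atoms over predicate symbols `P` and function symbols `F`. -/
structure Atom (P F : Type) where
  pred : P
  args : List (Term F)

namespace Atom
variable {P F : Type}

def subst (g : ℕ → Term F) (a : Atom P F) : Atom P F := ⟨a.pred, a.args.map (Term.subst g)⟩
def vars (a : Atom P F) : List ℕ := a.args.flatMap Term.vars
def IsGround (a : Atom P F) : Prop := a.vars = []
def funcs (a : Atom P F) : List (F × ℕ) := a.args.flatMap Term.funcs
/-- Whether the atom contains a proper functional term. -/
def hasPF (a : Atom P F) : Bool := a.args.any Term.isPF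
def size (a : Atom P F) : ℕ := 1 + (a.args.map Term.size).sum

end Atom

/-- A clause `H₁ ∨ ... ∨ Hₘ ← B₁ ∧ ... ∧ Bₖ` with head atoms `heads`
and body atoms `body`. -/
structure Clause (P F : Type) where
  heads : List (Atom P F)
  body : List (Atom P F)

namespace Clause
variable {P F : Type}

def atoms (C : Clause P F) : List (Atom P F) := C.heads ++ C.body
def vars (C : Clause P F) : List ℕ := C.atoms.flatMap Atom.vars
def bodyVars (C : Clause P F) : List ℕ := C.body.flatMap Atom.vars
def headVars (C : Clause P F) : List ℕ := C.heads.flatMap Atom.vars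
def maxVar (C : Clause P F) : ℕ := C.vars.foldr max 0
def subst (g : ℕ → Term F) (C : Clause P F) : Clause P F :=
  ⟨C.heads.map (Atom.subst g), C.body.map (Atom.subst g)⟩
/-- The predicate symbols (with the arity of the occurrence) occurring in a clause. -/
def preds (C : Clause P F) : List (P × ℕ) := C.atoms.map (fun a => (a.pred, a.args.length))
/-- The function symbols (with the arity of the occurrence) occurring in a clause. -/
def funcs (C : Clause P F) : List (F × ℕ) := C.atoms.flatMap Atom.funcs
/-- The number of occurrences of symbols in a clause. -/
def size (C : Clause P F) : ℕ := (C.atoms.map Atom.size).sum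

/-- A clause is range-restricted iff every variable occurring in it occurs in its body. -/
def RangeRestricted (C : Clause P F) : Prop := ∀ v ∈ C.vars, v ∈ C.bodyVars

/-- A Bernays–Schönfinkel clause: every functional term occurring in it is a constant. -/
def BS (C : Clause P F) : Prop := ∀ fn ∈ C.funcs, fn.2 = 0

end Clause

/-- A clause set is range-restricted iff all its clauses are. -/
def RangeRestrictedSet {P F : Type} (M : Set (Clause P F)) : Prop :=
  ∀ C ∈ M, C.RangeRestricted

/-- The predicate symbols (with arities) occurring in a clause set. -/
def predsOf {P F : Type} (M : Set (Clause P F)) : Set (P × ℕ) :=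
  { pn | ∃ C ∈ M, pn ∈ C.preds }

/-- The function symbols (with arities) occurring in a clause set. -/
def funcsOf {P F : Type} (M : Set (Clause P F)) : Set (F × ℕ) :=
  { fn | ∃ C ∈ M, fn ∈ C.funcs }

/-- A signature: a set of predicate symbols with arities and
a set of function symbols with arities. -/
structure Sig (P F : Type) where
  preds : Set (P × ℕ)
  funcs : Set (F × ℕ)

/-- The clause set `M` is well-formed over the signature `σ`: all symbols occurring in `M`
belong to `σ` (with matching arities). -/
def WFSet {P F : Type} (σ : Sig P F) (M : Set (Clause P F)) : Prop :=
  ∀ C ∈ M, (∀ pn ∈ C.preds, pn ∈ σ.preds) ∧ (∀ fn ∈ C.funcs, fn ∈ σ.funcs)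

/-- The total number of occurrences of symbols in a clause set. -/
noncomputable def setSize {P F : Type} (M : Set (Clause P F)) : ℕ :=
  ∑ᶠ C ∈ M, C.size

/-! ### Herbrand semantics -/

/-- A substitution is ground iff it maps every variable to a ground term. -/
def GroundSubst {F : Type} (g : ℕ → Term F) : Prop := ∀ n, (g n).IsGround

/-- A (Herbrand) interpretation `I` (a set of ground atoms) satisfies a clause iff
it satisfies every ground instance of it. -/
def satClause {P F : Type} (I : Set (Atom P F)) (C : Clause P F) : Prop :=
  ∀ g : ℕ → Term F, GroundSubst g →
    (∀ a ∈ C.body, a.subst g ∈ I) → ∃ a ∈ C.heads, a.subst g ∈ I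

/-- A clause set is satisfiable iff some Herbrand interpretation (a set of ground atoms)
satisfies every ground instance of every clause of it. -/
def Satisfiable {P F : Type} (M : Set (Clause P F)) : Prop :=
  ∃ I : Set (Atom P F), (∀ a ∈ I, a.IsGround) ∧ ∀ C ∈ M, satClause I C

/-! ### Equality axioms and E-satisfiability -/

/-- The equality atom `s ≈ t` (`eqP` being the distinguished equality predicate `≈`). -/
def eqAtom {P F : Type} (eqP : P) (s t : Term F) : Atom P F := ⟨eqP, [s, t]⟩

def rangeVars {F : Type} (n : ℕ) : List (Term F) := (List.range n).map Term.var

def xsList {F : Type} (n : ℕ) : List (Term F) := (List.range n).map (fun i => Term.var (2*i))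
def ysList {F : Type} (n : ℕ) : List (Term F) := (List.range n).map (fun i => Term.var (2*i+1))
def eqConjList {P F : Type} (eqP : P) (n : ℕ) : List (Atom P F) :=
  (List.range n).map (fun i => eqAtom eqP (Term.var (2*i)) (Term.var (2*i+1)))

/-- The equality axioms `EAX`: `≈` is reflexive, symmetric, transitive and compatible with
the given function and predicate symbols. -/
def EAX {P F : Type} (eqP : P) (Ps : Set (P × ℕ)) (Fs : Set (F × ℕ)) : Set (Clause P F) :=
  { ⟨[eqAtom eqP (Term.var 0) (Term.var 0)], []⟩,
    ⟨[eqAtom eqP (Term.var 1) (Term.var 0)], [eqAtom eqP (Term.var 0) (Term.var 1)]⟩,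
    ⟨[eqAtom eqP (Term.var 0) (Term.var 2)],
      [eqAtom eqP (Term.var 0) (Term.var 1), eqAtom eqP (Term.var 1) (Term.var 2)]⟩ } ∪
  { D | ∃ fn ∈ Fs,
      D = ⟨[eqAtom eqP (Term.app fn.1 (xsList fn.2)) (Term.app fn.1 (ysList fn.2))],
           eqConjList eqP fn.2⟩ } ∪
  { D | ∃ pn ∈ Ps,
      D = ⟨[⟨pn.1, ysList pn.2⟩], ⟨pn.1, xsList pn.2⟩ :: eqConjList eqP pn.2⟩ }

/-- A clause set `M` is E-satisfiable iff `M` together with the equality axioms for the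
symbols occurring in `M` is satisfiable. -/
def ESatisfiable {P F : Type} (eqP : P) (M : Set (Clause P F)) : Prop :=
  Satisfiable (M ∪ EAX eqP (predsOf M) (funcsOf M))

/-! ### Range-restricting transformations -/

/-- The atom `dom(t)`. -/
def domAtom {P F : Type} (domP : P) (t : Term F) : Atom P F := ⟨domP, [t]⟩

/-- The term `c` for a constant `c`. -/
def cTerm {F : Type} (c : F) : Term F := Term.app c []

/-- The clause `dom(c) ← ⊤`. -/
def domcClause {P F : Type} (domP : P) (c : F) : Clause P F :=
  ⟨[domAtom domP (cTerm c)], []⟩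

/-- Range-restricting a clause (Step (2) of `crr`, Step (3) of `rr`):
`H ← B` becomes `H ← B ∧ dom(x₁) ∧ ... ∧ dom(xₖ)` where `x₁,...,xₖ` are the variables
occurring in the head but not in the body. -/
def rangeRestrictClause {P F : Type} (domP : P) (C : Clause P F) : Clause P F :=
  ⟨C.heads, C.body ++
    ((C.headVars.filter (fun v => v ∉ C.bodyVars)).dedup).map
      (fun v => domAtom domP (Term.var v))⟩

/-- The argument list of the term abstraction of an atom: argument positions holding
non-variable terms are replaced by fresh variables. -/
def abstrArgs {F : Type} (base : ℕ) (ts : List (Term F)) : List (Term F) :=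
  ts.mapIdx (fun i t => if t.isVar then t else Term.var (base + i))

/-- Step (2) of the `rr` transformation: for each clause `H ← B` of `M`, each body atom
`P(t₁,...,tₙ)` of `B` with term abstraction `P(s₁,...,sₙ)` and abstraction substitution `α`,
the clauses `dom(xᵢ)α ← P(s₁,...,sₙ)` for every `xᵢ` in the domain of `α`. -/
def step2Set {P F : Type} (domP : P) (M : Set (Clause P F)) : Set (Clause P F) :=
  { D | ∃ C ∈ M, ∃ a ∈ C.body, ∃ i : Fin a.args.length,
        (a.args.get i).isVar = false ∧
        D = ⟨[domAtom domP (a.args.get i)],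
             [⟨a.pred, abstrArgs (C.maxVar + 1) a.args⟩]⟩ }

/-- Step (4) of the `rr` transformation: the clauses `dom(xᵢ) ← P(x₁,...,xₙ)` for every
`n`-ary predicate symbol `P` of the signature and every `1 ≤ i ≤ n`. -/
def step4Set {P F : Type} (domP : P) (Ps : Set (P × ℕ)) : Set (Clause P F) :=
  { D | ∃ pn ∈ Ps, ∃ i, i < pn.2 ∧
        D = ⟨[domAtom domP (Term.var i)], [⟨pn.1, rangeVars pn.2⟩]⟩ }

/-- Step (5) of the `rr` transformation: the clauses `dom(xᵢ) ← dom(f(x₁,...,xₙ))` for every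
`n`-ary function symbol `f` of the signature and every `1 ≤ i ≤ n`. -/
def step5Set {P F : Type} (domP : P) (Fs : Set (F × ℕ)) : Set (Clause P F) :=
  { D | ∃ fn ∈ Fs, ∃ i, i < fn.2 ∧
        D = ⟨[domAtom domP (Term.var i)],
             [domAtom domP (Term.app fn.1 (rangeVars fn.2))]⟩ }

/-- The new range-restricting transformation `rr` (over the signature `σ`, with fresh unary
predicate symbol `dom` and constant `c`): the clauses of `M`, the clause `dom(c) ← ⊤` and
the Step-(2) clauses, all range-restricted by Step (3), together with the Step-(4) and
Step-(5) clauses. -/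
def rr {P F : Type} [DecidableEq P] [DecidableEq F] (σ : Sig P F) (domP : P) (c : F)
    (M : Set (Clause P F)) : Set (Clause P F) :=
  (rangeRestrictClause domP '' (M ∪ {domcClause domP c} ∪ step2Set domP M))
  ∪ step4Set domP σ.preds ∪ step5Set domP σ.funcs

/-- Step (3) of the classical transformation `crr`: the clauses
`dom(f(x₁,...,xₙ)) ← dom(x₁) ∧ ... ∧ dom(xₙ)` enumerating the Herbrand universe. -/
def crrStep3 {P F : Type} (domP : P) (Fs : Set (F × ℕ)) : Set (Clause P F) :=
  { D | ∃ fn ∈ Fs,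
        D = ⟨[domAtom domP (Term.app fn.1 (rangeVars fn.2))],
             (List.range fn.2).map (fun i => domAtom domP (Term.var i))⟩ }

/-- The classical range-restricting transformation `crr`. -/
def crr {P F : Type} [DecidableEq P] [DecidableEq F] (σ : Sig P F) (domP : P) (c : F)
    (M : Set (Clause P F)) : Set (Clause P F) :=
  (rangeRestrictClause domP '' (M ∪ {domcClause domP c})) ∪ crrStep3 domP σ.funcs

/-! ### Shifting -/

/-- Partial flattening of the arguments of a non-equational body atom: top-level proper
functional terms are replaced by fresh variables. The `j`-th body atom uses the fresh
variables `base + Nat.pair j i`. -/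
def pfArgs {P F : Type} [DecidableEq P] (eqP : P) (base j : ℕ) (a : Atom P F) : Atom P F :=
  if a.pred = eqP then a
  else ⟨a.pred, a.args.mapIdx (fun i t => if t.isPF then Term.var (base + Nat.pair j i) else t)⟩

/-- The equations `tᵢ ≈ xᵢ` introduced by partially flattening a body atom. -/
def pfEqs {P F : Type} [DecidableEq P] (eqP : P) (base j : ℕ) (a : Atom P F) :
    List (Atom P F) :=
  if a.pred = eqP then []
  else (a.args.mapIdx (fun i t => (i, t))).filterMap
        (fun p => if p.2.isPF then
            some (eqAtom eqP p.2 (Term.var (base + Nat.pair j p.1))) else none)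

/-- Partial flattening of a clause. -/
def pfClause {P F : Type} [DecidableEq P] (eqP : P) (C : Clause P F) : Clause P F :=
  ⟨C.heads,
   C.body.mapIdx (fun j a => pfArgs eqP (C.maxVar + 1) j a) ++
   (C.body.mapIdx (fun j a => pfEqs eqP (C.maxVar + 1) j a)).flatten⟩

/-- The reflexivity unit clause `x ≈ x ← ⊤`. -/
def reflClause {P F : Type} (eqP : P) : Clause P F :=
  ⟨[eqAtom eqP (Term.var 0) (Term.var 0)], []⟩

/-- The partial flattening transformation `pf`. -/
def pf {P F : Type} [DecidableEq P] (eqP : P) (M : Set (Clause P F)) : Set (Clause P F) :=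
  pfClause eqP '' M ∪ {reflClause eqP}

/-- The atom `P̄(t₁,...,tₙ)` for the atom `P(t₁,...,tₙ)`, where `bar` maps each predicate
symbol `P` to the fresh predicate symbol `P̄` uniquely associated with it. -/
def barAtom {P F : Type} (bar : P → P) (a : Atom P F) : Atom P F := ⟨bar a.pred, a.args⟩

/-- Basic shifting of a clause: the body atoms containing a proper functional term are
moved, negated (via `bar`), into the head. -/
def bsClause {P F : Type} (bar : P → P) (C : Clause P F) : Clause P F :=
  ⟨C.heads ++ (C.body.filter (fun a => a.hasPF)).map (barAtom bar),
   C.body.filter (fun a => !a.hasPF)⟩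

/-- The predicate symbols (with arities) of shifted atoms of `M`. -/
def shiftedPreds {P F : Type} (M : Set (Clause P F)) : Set (P × ℕ) :=
  { pn | ∃ C ∈ M, ∃ a ∈ C.body, a.hasPF = true ∧ pn = (a.pred, a.args.length) }

/-- The basic shifting transformation `bs`: shift deep body atoms and add the shifted atom
consistency clauses `⊥ ← P(x₁,...,xₙ) ∧ P̄(x₁,...,xₙ)`. -/
def bs {P F : Type} (bar : P → P) (M : Set (Clause P F)) : Set (Clause P F) :=
  bsClause bar '' M ∪
  { D | ∃ pn ∈ shiftedPreds M,
        D = ⟨[], [⟨pn.1, rangeVars pn.2⟩, ⟨bar pn.1, rangeVars pn.2⟩]⟩ }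

/-- The shifting transformation: `sh(M) = bs(pf(M))`. -/
def sh {P F : Type} [DecidableEq P] (eqP : P) (bar : P → P) (M : Set (Clause P F)) :
    Set (Clause P F) :=
  bs bar (pf eqP M)

/-! ### Blocking -/

/-- The head `x ≈ y ∨ x ≉ y` of the blocking clauses. -/
def blockSplitHead {P F : Type} (eqP neqP : P) : List (Atom P F) :=
  [eqAtom eqP (Term.var 0) (Term.var 1), eqAtom neqP (Term.var 0) (Term.var 1)]

/-- The clause `⊥ ← x ≈ y ∧ x ≉ y`. -/
def eqNeqBot {P F : Type} (eqP neqP : P) : Clause P F :=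
  ⟨[], [eqAtom eqP (Term.var 0) (Term.var 1), eqAtom neqP (Term.var 0) (Term.var 1)]⟩

/-- The unrestricted domain blocking transformation `blud`. -/
def blud {P F : Type} (domP eqP neqP : P) (M : Set (Clause P F)) : Set (Clause P F) :=
  M ∪ { ⟨blockSplitHead eqP neqP, [domAtom domP (Term.var 0), domAtom domP (Term.var 1)]⟩,
        eqNeqBot eqP neqP }

/-- The atom `sub(s,t)`. -/
def subAtom {P F : Type} (subP : P) (s t : Term F) : Atom P F := ⟨subP, [s, t]⟩

/-- The axioms describing the subterm relationship: `sub(x,x) ← dom(x)` and, for every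
`n`-ary function symbol `f` of the signature and `1 ≤ i ≤ n`,
`sub(x, f(x₁,...,xₙ)) ← sub(x,xᵢ) ∧ dom(x) ∧ dom(f(x₁,...,xₙ))`. -/
def subClauses {P F : Type} (domP subP : P) (Fs : Set (F × ℕ)) : Set (Clause P F) :=
  { ⟨[subAtom subP (Term.var 0) (Term.var 0)], [domAtom domP (Term.var 0)]⟩ } ∪
  { D | ∃ fn ∈ Fs, ∃ i, i < fn.2 ∧
        D = ⟨[subAtom subP (Term.var fn.2) (Term.app fn.1 (rangeVars fn.2))],
             [subAtom subP (Term.var fn.2) (Term.var i),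
              domAtom domP (Term.var fn.2),
              domAtom domP (Term.app fn.1 (rangeVars fn.2))]⟩ }

/-- The subterm domain blocking transformation `blsd`. -/
def blsd {P F : Type} (σ : Sig P F) (domP eqP neqP subP : P) (M : Set (Clause P F)) :
    Set (Clause P F) :=
  M ∪ subClauses domP subP σ.funcs ∪
  { ⟨blockSplitHead eqP neqP, [subAtom subP (Term.var 0) (Term.var 1)]⟩,
    eqNeqBot eqP neqP }

/-- The subterm predicate blocking transformation `blsp`. -/
def blsp {P F : Type} (σ : Sig P F) (domP eqP neqP subP : P) (M : Set (Clause P F)) :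
    Set (Clause P F) :=
  M ∪ subClauses domP subP σ.funcs ∪
  { D | ∃ p : P, (p, 1) ∈ σ.preds ∧
        D = ⟨blockSplitHead eqP neqP,
             [subAtom subP (Term.var 0) (Term.var 1),
              ⟨p, [Term.var 0]⟩, ⟨p, [Term.var 1]⟩]⟩ } ∪
  { eqNeqBot eqP neqP }

/-- The unrestricted predicate blocking transformation `blup`. -/
def blup {P F : Type} (σ : Sig P F) (domP eqP neqP : P) (M : Set (Clause P F)) :
    Set (Clause P F) :=
  M ∪ { D | ∃ p : P, (p, 1) ∈ σ.preds ∧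
        D = ⟨blockSplitHead eqP neqP, [⟨p, [Term.var 0]⟩, ⟨p, [Term.var 1]⟩]⟩ } ∪
  { eqNeqBot eqP neqP }

/-! ### Combined transformations -/

/-- The base transformations `rr`, `sh∘rr`, `crr`, `sh∘crr`
(composition read left-to-right, so `(sh∘rr)(M) = rr(sh(M))`). -/
inductive BaseTr | rr | shrr | crr | shcrr

/-- The optional blocking transformations. -/
inductive BlockTr | id | blsd | blsp | blud | blup

def applyBase {P F : Type} [DecidableEq P] [DecidableEq F] (σ : Sig P F) (domP : P) (c : F)
    (eqP : P) (bar : P → P) : BaseTr → Set (Clause P F) → Set (Clause P F)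
  | .rr, M => rr σ domP c M
  | .shrr, M => rr σ domP c (sh eqP bar M)
  | .crr, M => crr σ domP c M
  | .shcrr, M => crr σ domP c (sh eqP bar M)

def applyBlock {P F : Type} (σ : Sig P F) (domP eqP neqP subP : P) :
    BlockTr → Set (Clause P F) → Set (Clause P F)
  | .id, M => M
  | .blsd, M => blsd σ domP eqP neqP subP M
  | .blsp, M => blsp σ domP eqP neqP subP M
  | .blud, M => blud domP eqP neqP M
  | .blup, M => blup σ domP eqP neqP M

/-- A combined transformation: a base transformation optionally followed by a blocking
transformation (composition read left-to-right). -/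
def applyTr {P F : Type} [DecidableEq P] [DecidableEq F] (σ : Sig P F) (domP : P) (c : F)
    (eqP neqP subP : P) (bar : P → P) (b : BaseTr) (τ : BlockTr) (M : Set (Clause P F)) :
    Set (Clause P F) :=
  applyBlock σ domP eqP neqP subP τ (applyBase σ domP c eqP bar b M)

/-- The clause `x ≈ x ← dom(x)`. -/
def reflDomClause {P F : Type} (domP eqP : P) : Clause P F :=
  ⟨[eqAtom eqP (Term.var 0) (Term.var 0)], [domAtom domP (Term.var 0)]⟩

end BUMG

/-!
The Herbrand model `J` of `sh(M)` and its equality axioms is itself a model of `M` and its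
equality axioms.

Basic shifting loses nothing: in a ground instance whose body holds in `J`, the head atom made
true cannot be a shifted atom `B̄`, since `B` itself is in the body and the consistency clause
`⊥ ← B ∧ B̄` would be violated. So `J ⊨ bs(N)` implies `J ⊨ N`.

Partial flattening loses nothing either: a ground instance of `C` extends to a ground instance
of `pf(C)` by sending each fresh variable `xᵢ` to the instance of the term `tᵢ` it replaced;
the flattened atoms become the original ones, and the new equations `tᵢ ≈ xᵢ` hold by the unit
clause `x ≈ x`. So `J ⊨ pf(M)` implies `J ⊨ M`.

Finally every symbol of `M` (with its arity) occurs in `sh(M)`, so the equality axioms for `M`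
are among those for `sh(M)`.
-/

namespace BUMG

namespace Term
variable {F : Type}

theorem subst_congr : ∀ (t : Term F) {g g' : ℕ → Term F},
    (∀ v ∈ t.vars, g v = g' v) → t.subst g = t.subst g'
  | var n, g, g', h => by
      simp only [subst]; exact h n (by simp [vars])
  | app f ts, g, g', h => by
      simp only [subst, app.injEq, true_and]
      apply List.map_congr_left
      rintro ⟨t, ht⟩ -
      exact subst_congr t fun v hv => h v (by
        simp only [vars, List.mem_flatMap]
        exact ⟨⟨t, ht⟩, List.mem_attach _ _, hv⟩)
decreasing_by simp_wf; have := List.sizeOf_lt_of_mem ht; omega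

theorem isGround_subst {g : ℕ → Term F} (hg : GroundSubst g) :
    ∀ t : Term F, (t.subst g).IsGround
  | var n => by simpa only [subst] using hg n
  | app f ts => by
      simp only [subst, IsGround, vars, List.flatMap_eq_nil_iff]
      rintro ⟨x, hx⟩ -
      obtain ⟨⟨t, ht⟩, -, rfl⟩ := List.mem_map.1 hx
      exact isGround_subst hg t
decreasing_by simp_wf; have := List.sizeOf_lt_of_mem ht; omega

end Term

section Semantics
variable {P F : Type} {J : Set (Atom P F)}

theorem eqAtom_mem_of_satClause_reflClause {eqP : P} (hJ : satClause J (reflClause eqP))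
    {s : Term F} (hs : s.IsGround) : eqAtom eqP s s ∈ J := by
  obtain ⟨a, ha, haJ⟩ := hJ (fun _ => s) (fun _ => hs) (by simp [reflClause])
  simp only [reflClause, List.mem_singleton] at ha
  subst ha
  simpa [eqAtom, Atom.subst, Term.subst] using haJ

theorem subst_rangeVars (l : List (Term F)) (g : ℕ → Term F) :
    (rangeVars l.length).map (Term.subst fun i => (l.getD i (Term.var 0)).subst g) =
      l.map (Term.subst g) := by
  apply List.ext_getElem (by simp [rangeVars])
  intro i h _
  simp only [rangeVars, List.length_map, List.length_range] at h
  simp [rangeVars, Term.subst, List.getElem?_eq_getElem h]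

theorem barAtom_subst_not_mem {bar : P → P} {N : Set (Clause P F)}
    (hJ : ∀ D ∈ bs bar N, satClause J D) {D : Clause P F} (hD : D ∈ N)
    {b : Atom P F} (hb : b ∈ D.body) (hpf : b.hasPF) {g : ℕ → Term F} (hg : GroundSubst g)
    (hbJ : b.subst g ∈ J) : (barAtom bar b).subst g ∉ J := by
  intro hbarJ
  have hconsistency := hJ _ (Or.inr ⟨_, ⟨D, hD, b, hb, hpf, rfl⟩, rfl⟩)
  obtain ⟨_, hmem, -⟩ := hconsistency (fun i => (b.args.getD i (Term.var 0)).subst g)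
    (fun _ => Term.isGround_subst hg _) (by
      simp only [List.mem_cons, List.not_mem_nil, or_false]
      rintro c (rfl | rfl) <;> simp only [Atom.subst, subst_rangeVars]
      exacts [hbJ, hbarJ])
  exact List.not_mem_nil hmem

theorem satClause_of_satClause_bs {bar : P → P} {N : Set (Clause P F)}
    (hJ : ∀ D ∈ bs bar N, satClause J D) : ∀ D ∈ N, satClause J D := by
  intro D hD g hg hbody
  obtain ⟨a, ha, haJ⟩ := hJ _ (Or.inl ⟨D, hD, rfl⟩) g hg
    fun b hb => hbody b (List.mem_filter.1 hb).1
  rcases List.mem_append.1 ha with ha | ha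
  · exact ⟨a, ha, haJ⟩
  · obtain ⟨b, hb, rfl⟩ := List.mem_map.1 ha
    obtain ⟨hbD, hpf⟩ := List.mem_filter.1 hb
    exact absurd haJ (barAtom_subst_not_mem hJ hD hbD hpf hg (hbody b hbD))

end Semantics

section Flattening
variable {P F : Type}

theorem Clause.le_maxVar {C : Clause P F} {a : Atom P F} (ha : a ∈ C.atoms)
    {t : Term F} (ht : t ∈ a.args) {v : ℕ} (hv : v ∈ t.vars) : v ≤ C.maxVar :=
  List.le_max_of_le' 0
    (List.mem_flatMap.2 ⟨a, ha, List.mem_flatMap.2 ⟨t, ht, hv⟩⟩) le_rfl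

/-- The instance of `pfClause C` induced by the instance `g` of `C`: the fresh variable
`C.maxVar + 1 + Nat.pair j i` gets the value of the `i`-th argument of the `j`-th body atom. -/
def flatSubst (g : ℕ → Term F) (C : Clause P F) (n : ℕ) : Term F :=
  if n ≤ C.maxVar then g n
  else
    (((C.body.map Atom.args).getD (n - (C.maxVar + 1)).unpair.1 []).getD
      (n - (C.maxVar + 1)).unpair.2 (Term.var 0)).subst g

variable {g : ℕ → Term F} {C : Clause P F}

theorem groundSubst_flatSubst (hg : GroundSubst g) : GroundSubst (flatSubst g C) := by
  intro n
  unfold flatSubst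
  split
  · exact hg n
  · exact Term.isGround_subst hg _

theorem flatSubst_fresh {i j : ℕ} (hj : j < C.body.length) (hi : i < C.body[j].args.length) :
    flatSubst g C (C.maxVar + 1 + Nat.pair j i) = C.body[j].args[i].subst g := by
  rw [flatSubst, if_neg (by omega), Nat.add_sub_cancel_left, Nat.unpair_pair]
  simp [hj, hi]

theorem subst_flatSubst_of_mem_args {a : Atom P F} (ha : a ∈ C.atoms) {t : Term F}
    (ht : t ∈ a.args) : t.subst (flatSubst g C) = t.subst g :=
  Term.subst_congr t fun _ hv => if_pos (C.le_maxVar ha ht hv)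

theorem subst_flatSubst_of_mem_atoms {a : Atom P F} (ha : a ∈ C.atoms) :
    a.subst (flatSubst g C) = a.subst g := by
  simp only [Atom.subst, Atom.mk.injEq, true_and]
  exact List.map_congr_left fun t ht => subst_flatSubst_of_mem_args ha ht

variable [DecidableEq P] {eqP : P}

theorem mem_pfEqs {base j : ℕ} {a b : Atom P F} :
    b ∈ pfEqs eqP base j a ↔ a.pred ≠ eqP ∧ ∃ (i : ℕ) (hi : i < a.args.length),
      a.args[i].isPF ∧ b = eqAtom eqP a.args[i] (Term.var (base + Nat.pair j i)) := by
  unfold pfEqs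
  split_ifs with hpred
  · simp [hpred]
  · simp only [hpred, ne_eq, not_false_eq_true, true_and, List.mem_filterMap, List.mem_mapIdx]
    constructor
    · rintro ⟨_, ⟨i, hi, rfl⟩, hb⟩
      split_ifs at hb with hpf
      exact ⟨i, hi, hpf, (Option.some.inj hb).symm⟩
    · rintro ⟨i, hi, hpf, rfl⟩
      exact ⟨_, ⟨i, hi, rfl⟩, by simp [hpf]⟩

theorem pfArgs_subst_flatSubst {j : ℕ} (hj : j < C.body.length) :
    (pfArgs eqP (C.maxVar + 1) j C.body[j]).subst (flatSubst g C) = C.body[j].subst g := by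
  have hmem : C.body[j] ∈ C.atoms := List.mem_append_right _ (List.getElem_mem hj)
  unfold pfArgs
  split_ifs
  · exact subst_flatSubst_of_mem_atoms hmem
  · simp only [Atom.subst, Atom.mk.injEq, true_and]
    apply List.ext_getElem (by simp)
    intro i hi _
    simp only [List.length_map, List.length_mapIdx] at hi
    simp only [List.getElem_map, List.getElem_mapIdx]
    split
    · simp only [Term.subst]
      exact flatSubst_fresh hj hi
    · exact subst_flatSubst_of_mem_args hmem (List.getElem_mem hi)

theorem satClause_of_satClause_pf {M : Set (Clause P F)} {J : Set (Atom P F)}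
    (hJ : ∀ D ∈ pf eqP M, satClause J D) : ∀ C ∈ M, satClause J C := by
  intro C hC g hg hbody
  have hrefl : ∀ s : Term F, s.IsGround → eqAtom eqP s s ∈ J := fun _ =>
    eqAtom_mem_of_satClause_reflClause (hJ _ (Or.inr rfl))
  have hbody' : ∀ b ∈ (pfClause eqP C).body, b.subst (flatSubst g C) ∈ J := by
    intro b hb
    rcases List.mem_append.1 hb with hb | hb
    · obtain ⟨j, hj, rfl⟩ := List.mem_mapIdx.1 hb
      rw [pfArgs_subst_flatSubst hj]
      exact hbody _ (List.getElem_mem hj)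
    · obtain ⟨l, hl, hbl⟩ := List.mem_flatten.1 hb
      obtain ⟨j, hj, rfl⟩ := List.mem_mapIdx.1 hl
      obtain ⟨-, i, hi, -, rfl⟩ := mem_pfEqs.1 hbl
      have hmem : C.body[j] ∈ C.atoms := List.mem_append_right _ (List.getElem_mem hj)
      simp only [eqAtom, Atom.subst, List.map_cons, List.map_nil, Term.subst,
        flatSubst_fresh hj hi, subst_flatSubst_of_mem_args hmem (List.getElem_mem hi)]
      exact hrefl _ (Term.isGround_subst hg _)
  obtain ⟨a, ha, haJ⟩ :=
    hJ _ (Or.inl ⟨C, hC, rfl⟩) (flatSubst g C) (groundSubst_flatSubst hg) hbody'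
  exact ⟨a, ha, by rwa [← subst_flatSubst_of_mem_atoms (C := C) (List.mem_append_left _ ha)]⟩

end Flattening

section Symbols
variable {P F : Type}

theorem predsOf_subset_predsOf_bs (bar : P → P) (N : Set (Clause P F)) :
    predsOf N ⊆ predsOf (bs bar N) := by
  rintro pn ⟨D, hD, hpn⟩
  obtain ⟨a, ha, rfl⟩ := List.mem_map.1 hpn
  have hbs : bsClause bar D ∈ bs bar N := Or.inl ⟨D, hD, rfl⟩
  rcases List.mem_append.1 ha with ha | ha
  · exact ⟨_, hbs, List.mem_map.2 ⟨a, List.mem_append_left _ (List.mem_append_left _ ha), rfl⟩⟩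
  by_cases hpf : a.hasPF
  · refine ⟨_, Or.inr ⟨_, ⟨D, hD, a, ha, hpf, rfl⟩, rfl⟩, List.mem_map.2 ⟨_,
      List.mem_append_right _ List.mem_cons_self, by simp [rangeVars]⟩⟩
  · exact ⟨_, hbs, List.mem_map.2 ⟨a,
      List.mem_append_right _ (List.mem_filter.2 ⟨ha, by simpa using hpf⟩), rfl⟩⟩

theorem funcsOf_subset_funcsOf_bs (bar : P → P) (N : Set (Clause P F)) :
    funcsOf N ⊆ funcsOf (bs bar N) := by
  rintro fn ⟨D, hD, hfn⟩
  refine ⟨bsClause bar D, Or.inl ⟨D, hD, rfl⟩, ?_⟩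
  obtain ⟨a, ha, hfa⟩ := List.mem_flatMap.1 hfn
  rcases List.mem_append.1 ha with ha | ha
  · exact List.mem_flatMap.2 ⟨a, List.mem_append_left _ (List.mem_append_left _ ha), hfa⟩
  by_cases hpf : a.hasPF
  · exact List.mem_flatMap.2 ⟨barAtom bar a, List.mem_append_left _
      (List.mem_append_right _ (List.mem_map.2 ⟨a, List.mem_filter.2 ⟨ha, hpf⟩, rfl⟩)), hfa⟩
  · exact List.mem_flatMap.2 ⟨a,
      List.mem_append_right _ (List.mem_filter.2 ⟨ha, by simpa using hpf⟩), hfa⟩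

variable [DecidableEq P] (eqP : P)

theorem predsOf_subset_predsOf_pf (M : Set (Clause P F)) : predsOf M ⊆ predsOf (pf eqP M) := by
  rintro pn ⟨C, hC, hpn⟩
  refine ⟨pfClause eqP C, Or.inl ⟨C, hC, rfl⟩, ?_⟩
  obtain ⟨a, ha, rfl⟩ := List.mem_map.1 hpn
  rcases List.mem_append.1 ha with ha | ha
  · exact List.mem_map.2 ⟨a, List.mem_append_left _ ha, rfl⟩
  obtain ⟨j, hj, rfl⟩ := List.mem_iff_getElem.1 ha
  refine List.mem_map.2 ⟨_, List.mem_append_right _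
    (List.mem_append_left _ (List.mem_mapIdx.2 ⟨j, hj, rfl⟩)), ?_⟩
  unfold pfArgs
  split_ifs <;> simp

theorem funcs_subset_pfArgs_append_pfEqs (base j : ℕ) (a : Atom P F) :
    a.funcs ⊆ (pfArgs eqP base j a).funcs ++ (pfEqs eqP base j a).flatMap Atom.funcs := by
  intro fn hfn
  by_cases hpred : a.pred = eqP
  · simp [pfArgs, hpred, hfn]
  obtain ⟨t, ht, hft⟩ := List.mem_flatMap.1 hfn
  obtain ⟨i, hi, rfl⟩ := List.mem_iff_getElem.1 ht
  by_cases hpf : a.args[i].isPF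
  · refine List.mem_append_right _
      (List.mem_flatMap.2 ⟨_, mem_pfEqs.2 ⟨hpred, i, hi, hpf, rfl⟩, ?_⟩)
    simp [eqAtom, Atom.funcs, hft]
  · refine List.mem_append_left _ (List.mem_flatMap.2 ⟨a.args[i], ?_, hft⟩)
    simp only [pfArgs, if_neg hpred]
    exact List.mem_mapIdx.2 ⟨i, hi, by simp [hpf]⟩

theorem funcsOf_subset_funcsOf_pf (M : Set (Clause P F)) : funcsOf M ⊆ funcsOf (pf eqP M) := by
  rintro fn ⟨C, hC, hfn⟩
  refine ⟨pfClause eqP C, Or.inl ⟨C, hC, rfl⟩, ?_⟩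
  obtain ⟨a, ha, hfa⟩ := List.mem_flatMap.1 hfn
  rcases List.mem_append.1 ha with ha | ha
  · exact List.mem_flatMap.2 ⟨a, List.mem_append_left _ ha, hfa⟩
  obtain ⟨j, hj, rfl⟩ := List.mem_iff_getElem.1 ha
  rcases List.mem_append.1 (funcs_subset_pfArgs_append_pfEqs eqP (C.maxVar + 1) j _ hfa)
    with h | h
  · exact List.mem_flatMap.2 ⟨_, List.mem_append_right _
      (List.mem_append_left _ (List.mem_mapIdx.2 ⟨j, hj, rfl⟩)), h⟩
  · obtain ⟨b, hb, hfb⟩ := List.mem_flatMap.1 h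
    exact List.mem_flatMap.2 ⟨b, List.mem_append_right _ (List.mem_append_right _
      (List.mem_flatten.2 ⟨_, List.mem_mapIdx.2 ⟨j, hj, rfl⟩, hb⟩)), hfb⟩

end Symbols

theorem EAX_mono {P F : Type} {eqP : P} {Ps Ps' : Set (P × ℕ)} {Fs Fs' : Set (F × ℕ)}
    (hP : Ps ⊆ Ps') (hF : Fs ⊆ Fs') : EAX eqP Ps Fs ⊆ EAX eqP Ps' Fs' := by
  rintro D ((h | ⟨fn, hfn, rfl⟩) | ⟨pn, hpn, rfl⟩)
  · exact Or.inl (Or.inl h)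
  · exact Or.inl (Or.inr ⟨fn, hF hfn, rfl⟩)
  · exact Or.inr ⟨pn, hP hpn, rfl⟩

theorem sh_E_completeness_general {P F : Type} [DecidableEq P]
    (eqP : P) (bar : P → P) (M : Set (Clause P F))
    (hsat : ESatisfiable eqP (sh eqP bar M)) :
    ESatisfiable eqP M := by
  obtain ⟨J, hground, hJ⟩ := hsat
  have hpreds : predsOf M ⊆ predsOf (sh eqP bar M) :=
    (predsOf_subset_predsOf_pf eqP M).trans (predsOf_subset_predsOf_bs bar _)
  have hfuncs : funcsOf M ⊆ funcsOf (sh eqP bar M) :=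
    (funcsOf_subset_funcsOf_pf eqP M).trans (funcsOf_subset_funcsOf_bs bar _)
  refine ⟨J, hground, ?_⟩
  rintro C (hC | hC)
  · exact satClause_of_satClause_pf
      (satClause_of_satClause_bs fun D hD => hJ D (Or.inl hD)) C hC
  · exact hJ C (Or.inr (EAX_mono hpreds hfuncs hC))

/-- **Completeness of shifting w.r.t. E-interpretations** (Corollary 2): for every clause
set `M`, if `sh(M)` is E-satisfiable then `M` is E-satisfiable, where `sh(M) = bs(pf(M))`. -/
theorem sh_E_completeness {P F : Type} [DecidableEq P] [DecidableEq F]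
    (eqP : P) (bar : P → P) (M : Set (Clause P F)) (hfin : M.Finite)
    (hbarInj : Function.Injective bar)
    (hbarFresh : ∀ p n, (bar p, n) ∉ predsOf (pf eqP M))
    (hsat : ESatisfiable eqP (sh eqP bar M)) :
    ESatisfiable eqP M :=
  sh_E_completeness_general eqP bar M hsat

end BUMG
end

section
/- Range-restrictedness of the combined transformations: for every clause set M and every transformation tr in {rr, sh∘rr, crr, sh∘crr} ∪ {π∘τ : π ∈ {rr, sh∘rr, crr, sh∘crr}, τ ∈ {blsd, blsp, blud, blup}} (composition read left-to-right, e.g. (sh∘rr∘blud)(M) = blud(rr(sh(M)))), the clause set tr(M) is range-restricted. -/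
/-! Both `rr` and `crr` pass every clause they keep through `rangeRestrictClause`, which adds
`dom(x)` to the body for each head variable `x` missing from it, and every other clause they add
has its head variables among its body variables by construction. So their output is
range-restricted whatever the input, in particular after shifting. The blocking
transformations add only clauses whose head variables `x, y` occur in the body, so they
preserve range-restrictedness. -/

namespace BUMG

namespace Term
variable {F : Type}

@[simp]
lemma vars_var (n : ℕ) : (var n : Term F).vars = [n] := by
  rw [vars]

@[simp]
lemma vars_app (f : F) (ts : List (Term F)) : (app f ts).vars = ts.flatMap vars := by
  rw [vars]
  conv_rhs => rw [← List.attach_map_subtype_val ts, List.flatMap_map]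

end Term

@[simp]
lemma flatMap_vars_rangeVars {F : Type} (n : ℕ) :
    (rangeVars n : List (Term F)).flatMap Term.vars = List.range n := by
  simp [rangeVars, List.flatMap_map]

namespace Clause
variable {P F : Type}

lemma rangeRestricted_iff (C : Clause P F) :
    C.RangeRestricted ↔ ∀ v ∈ C.headVars, v ∈ C.bodyVars := by
  simp only [RangeRestricted, vars, atoms, headVars, bodyVars, List.flatMap_append,
    List.mem_append]
  grind

lemma rangeRestricted_rangeRestrictClause (domP : P) (C : Clause P F) :
    (rangeRestrictClause domP C).RangeRestricted := by
  rw [rangeRestricted_iff]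
  intro v hv
  simp only [bodyVars, rangeRestrictClause, List.flatMap_append, List.mem_append]
  by_cases hb : v ∈ C.bodyVars
  · exact .inl hb
  · right
    simp only [List.flatMap_map, List.mem_flatMap, List.mem_dedup, List.mem_filter]
    exact ⟨v, ⟨hv, by simpa [bodyVars] using hb⟩, by simp [domAtom, Atom.vars]⟩

end Clause

section RangeRestrictedSet
variable {P F : Type}

@[simp]
lemma rangeRestrictedSet_union {M N : Set (Clause P F)} :
    RangeRestrictedSet (M ∪ N) ↔ RangeRestrictedSet M ∧ RangeRestrictedSet N := by
  simp only [RangeRestrictedSet, Set.mem_union, or_imp, forall_and]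

@[simp]
lemma rangeRestrictedSet_insert {C : Clause P F} {M : Set (Clause P F)} :
    RangeRestrictedSet (insert C M) ↔ C.RangeRestricted ∧ RangeRestrictedSet M :=
  Set.forall_mem_insert

@[simp]
lemma rangeRestrictedSet_singleton {C : Clause P F} :
    RangeRestrictedSet {C} ↔ C.RangeRestricted := by
  simp [RangeRestrictedSet]

lemma rangeRestrictedSet_image_rangeRestrictClause (domP : P) (M : Set (Clause P F)) :
    RangeRestrictedSet (rangeRestrictClause domP '' M) :=
  Set.forall_mem_image.2 fun C _ => C.rangeRestricted_rangeRestrictClause domP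

end RangeRestrictedSet

section Transformations
variable {P F : Type}

lemma rangeRestrictedSet_step4Set (domP : P) (Ps : Set (P × ℕ)) :
    RangeRestrictedSet (step4Set domP Ps : Set (Clause P F)) := by
  rintro _ ⟨pn, -, i, hi, rfl⟩
  simp [Clause.rangeRestricted_iff, Clause.headVars, Clause.bodyVars, domAtom, Atom.vars, hi]

lemma rangeRestrictedSet_step5Set (domP : P) (Fs : Set (F × ℕ)) :
    RangeRestrictedSet (step5Set domP Fs : Set (Clause P F)) := by
  rintro _ ⟨fn, -, i, hi, rfl⟩
  simp [Clause.rangeRestricted_iff, Clause.headVars, Clause.bodyVars, domAtom, Atom.vars, hi]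

lemma rangeRestrictedSet_crrStep3 (domP : P) (Fs : Set (F × ℕ)) :
    RangeRestrictedSet (crrStep3 domP Fs : Set (Clause P F)) := by
  rintro _ ⟨fn, -, rfl⟩
  simp [Clause.rangeRestricted_iff, Clause.headVars, Clause.bodyVars, domAtom, Atom.vars,
    List.flatMap_map]

lemma rangeRestrictedSet_rr [DecidableEq P] [DecidableEq F] (σ : Sig P F) (domP : P) (c : F)
    (M : Set (Clause P F)) : RangeRestrictedSet (rr σ domP c M) := by
  simp only [rr, rangeRestrictedSet_union]
  exact ⟨⟨rangeRestrictedSet_image_rangeRestrictClause domP _,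
    rangeRestrictedSet_step4Set domP σ.preds⟩, rangeRestrictedSet_step5Set domP σ.funcs⟩

lemma rangeRestrictedSet_crr [DecidableEq P] [DecidableEq F] (σ : Sig P F) (domP : P) (c : F)
    (M : Set (Clause P F)) : RangeRestrictedSet (crr σ domP c M) := by
  simp only [crr, rangeRestrictedSet_union]
  exact ⟨rangeRestrictedSet_image_rangeRestrictClause domP _,
    rangeRestrictedSet_crrStep3 domP σ.funcs⟩

lemma rangeRestrictedSet_subClauses (domP subP : P) (Fs : Set (F × ℕ)) :
    RangeRestrictedSet (subClauses domP subP Fs) := by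
  simp only [subClauses, rangeRestrictedSet_union, rangeRestrictedSet_singleton]
  constructor
  · simp [Clause.rangeRestricted_iff, Clause.headVars, Clause.bodyVars, domAtom, subAtom,
      Atom.vars]
  · rintro _ ⟨fn, -, i, hi, rfl⟩
    simp +contextual [Clause.rangeRestricted_iff, Clause.headVars, Clause.bodyVars, domAtom,
      subAtom, Atom.vars]

lemma rangeRestricted_eqNeqBot (eqP neqP : P) :
    (eqNeqBot eqP neqP : Clause P F).RangeRestricted := by
  simp [Clause.rangeRestricted_iff, Clause.headVars, eqNeqBot]

lemma rangeRestricted_blockSplitHead (eqP neqP : P) {body : List (Atom P F)}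
    (h0 : 0 ∈ body.flatMap Atom.vars) (h1 : 1 ∈ body.flatMap Atom.vars) :
    (Clause.mk (blockSplitHead eqP neqP) body).RangeRestricted := by
  rw [Clause.rangeRestricted_iff]
  intro v hv
  obtain rfl | rfl : v = 0 ∨ v = 1 := by
    simp [Clause.headVars, blockSplitHead, eqAtom, Atom.vars] at hv
    tauto
  exacts [h0, h1]

end Transformations

lemma rangeRestrictedSet_applyBlock {P F : Type} (σ : Sig P F) (domP eqP neqP subP : P)
    (τ : BlockTr) {M : Set (Clause P F)} (hM : RangeRestrictedSet M) :
    RangeRestrictedSet (applyBlock σ domP eqP neqP subP τ M) := by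
  have hsub := rangeRestrictedSet_subClauses (F := F) domP subP σ.funcs
  have hbot := rangeRestricted_eqNeqBot (F := F) eqP neqP
  cases τ with
  | id => exact hM
  | blsd =>
    simp only [applyBlock, blsd, rangeRestrictedSet_union, rangeRestrictedSet_insert,
      rangeRestrictedSet_singleton]
    exact ⟨⟨hM, hsub⟩, rangeRestricted_blockSplitHead eqP neqP (by simp [subAtom, Atom.vars])
      (by simp [subAtom, Atom.vars]), hbot⟩
  | blsp =>
    simp only [applyBlock, blsp, rangeRestrictedSet_union, rangeRestrictedSet_singleton]
    refine ⟨⟨⟨hM, hsub⟩, ?_⟩, hbot⟩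
    rintro _ ⟨p, -, rfl⟩
    exact rangeRestricted_blockSplitHead eqP neqP (by simp [subAtom, Atom.vars])
      (by simp [subAtom, Atom.vars])
  | blud =>
    simp only [applyBlock, blud, rangeRestrictedSet_union, rangeRestrictedSet_insert,
      rangeRestrictedSet_singleton]
    exact ⟨hM, rangeRestricted_blockSplitHead eqP neqP (by simp [domAtom, Atom.vars])
      (by simp [domAtom, Atom.vars]), hbot⟩
  | blup =>
    simp only [applyBlock, blup, rangeRestrictedSet_union, rangeRestrictedSet_singleton]
    refine ⟨⟨hM, ?_⟩, hbot⟩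
    rintro _ ⟨p, -, rfl⟩
    exact rangeRestricted_blockSplitHead eqP neqP (by simp [Atom.vars]) (by simp [Atom.vars])

lemma rangeRestrictedSet_applyBase {P F : Type} [DecidableEq P] [DecidableEq F] (σ : Sig P F)
    (domP : P) (c : F) (eqP : P) (bar : P → P) (b : BaseTr) (M : Set (Clause P F)) :
    RangeRestrictedSet (applyBase σ domP c eqP bar b M) := by
  cases b
  case rr | shrr => exact rangeRestrictedSet_rr σ domP c _
  case crr | shcrr => exact rangeRestrictedSet_crr σ domP c _

theorem combined_rangeRestricted_general {P F : Type} [DecidableEq P] [DecidableEq F]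
    (σ : Sig P F) (domP : P) (c : F) (eqP neqP subP : P) (bar : P → P)
    (b : BaseTr) (τ : BlockTr) (M : Set (Clause P F)) :
    RangeRestrictedSet (applyTr σ domP c eqP neqP subP bar b τ M) :=
  rangeRestrictedSet_applyBlock σ domP eqP neqP subP τ
    (rangeRestrictedSet_applyBase σ domP c eqP bar b M)

/-- **Range-restrictedness of the combined transformations** (Theorem 1 (i)): for every
clause set `M` and every transformation `tr` in
`{rr, sh∘rr, crr, sh∘crr} ∪ {π∘τ : π ∈ {rr, sh∘rr, crr, sh∘crr}, τ ∈ {blsd, blsp, blud, blup}}`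
(composition read left-to-right), the clause set `tr(M)` is range-restricted. -/
theorem combined_rangeRestricted {P F : Type} [DecidableEq P] [DecidableEq F]
    (σ : Sig P F) (domP : P) (c : F) (eqP neqP subP : P) (bar : P → P)
    (b : BaseTr) (τ : BlockTr) (M : Set (Clause P F)) (hfin : M.Finite) :
    RangeRestrictedSet (applyTr σ domP c eqP neqP subP bar b τ M) :=
  combined_rangeRestricted_general σ domP c eqP neqP subP bar b τ M

end BUMG
end
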